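/- The commuting graph of the dihedral group D_{2·2m} (m ≥ 2) has exactly m(2m - 1) + 5m edges. -/

import Mathlib

/-- The power graph of a group: distinct `x`, `y` are adjacent iff one is a power of the other. -/
def powerGraph (G : Type*) [Group G] : SimpleGraph G where
  Adj x y := x ≠ y ∧ ((∃ k : ℤ, x = y ^ k) ∨ (∃ k : ℤ, y = x ^ k))
  symm := by
    refine ⟨?_⟩; rintro x y ⟨hne, h | h⟩
    · exact ⟨hne.symm, Or.inr h⟩
    · exact ⟨hne.symm, Or.inl h⟩
  loopless := by refine ⟨?_⟩; rintro x ⟨hne, -⟩; exact hne rfl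

/-- The commuting graph of a group: distinct `x`, `y` are adjacent iff they commute. -/
def commutingGraph (G : Type*) [Group G] : SimpleGraph G where
  Adj x y := x ≠ y ∧ x * y = y * x
  symm := by refine ⟨?_⟩; rintro x y ⟨hne, h⟩; exact ⟨hne.symm, h.symm⟩
  loopless := by refine ⟨?_⟩; rintro x ⟨hne, -⟩; exact hne rfl

/-- The enhanced power graph of a group: distinct `x`, `y` are adjacent iff `⟨x, y⟩` is cyclic. -/
def enhancedPowerGraph (G : Type*) [Group G] : SimpleGraph G where
  Adj x y := x ≠ y ∧ IsCyclic ↥(Subgroup.closure {x, y})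
  symm := by refine ⟨?_⟩; rintro x y ⟨hne, h⟩; rw [Set.pair_comm] at h; exact ⟨hne.symm, h⟩
  loopless := by refine ⟨?_⟩; rintro x ⟨hne, -⟩; exact hne rfl

/-! Counting ordered commuting pairs: `r i` and `r j` always commute, `r i` and `sr j` commute
iff `2i = 0`, and `sr i`, `sr j` commute iff `2(i - j) = 0`. In `ZMod (2m)` the equation `2x = 0`
has exactly the two solutions `0` and `m`, so `D_{2·2m}` has `(2m)² + 3·2·2m` commuting pairs.
Removing the `4m` diagonal pairs and halving gives `2m² + 4m` edges. -/

namespace ZMod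

theorem add_self_eq_zero_iff_eq_zero_or_eq_half {m : ℕ} [NeZero m] {x : ZMod (2 * m)} :
    x + x = 0 ↔ x = 0 ∨ x = m := by
  constructor
  · intro h
    rw [← natCast_zmod_val x, ← Nat.cast_add, natCast_eq_zero_iff, ← two_mul] at h
    obtain ⟨j, hj⟩ := Nat.dvd_of_mul_dvd_mul_left two_pos h
    have hj2 : j < 2 := by
      have := val_lt x
      nlinarith [NeZero.pos m]
    rw [← natCast_zmod_val x, hj]
    interval_cases j <;> simp
  · rintro (rfl | rfl)
    · exact add_zero 0
    · rw [← Nat.cast_add, ← two_mul, natCast_self]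

theorem card_add_self_eq_zero (m : ℕ) [NeZero m] :
    Nat.card {x : ZMod (2 * m) // x + x = 0} = 2 := by
  have hm : (m : ZMod (2 * m)) ≠ 0 := by
    rw [Ne, natCast_eq_zero_iff]
    exact Nat.not_dvd_of_pos_of_lt (NeZero.pos m) (by have := NeZero.pos m; omega)
  simp_rw [add_self_eq_zero_iff_eq_zero_or_eq_half]
  exact Set.ncard_pair hm.symm

end ZMod

theorem two_mul_card_edgeSet_commutingGraph_add_card (G : Type*) [Group G] [Finite G] :
    2 * Nat.card (commutingGraph G).edgeSet + Nat.card G =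
      Nat.card {p : G × G // Commute p.1 p.2} := by
  classical
  have := Fintype.ofFinite G
  rw [Nat.card_eq_fintype_card, ← SimpleGraph.edgeFinset_card,
    SimpleGraph.two_mul_card_edgeFinset, Nat.card_eq_fintype_card, Nat.card_eq_fintype_card,
    Fintype.card_subtype, ← Finset.card_filter_add_card_filter_not
      (s := Finset.univ.filter fun p : G × G => Commute p.1 p.2) (p := fun p => p.1 ≠ p.2)]
  congr 1
  · rw [Finset.filter_filter]
    exact congrArg _ (Finset.filter_congr fun _ _ => and_comm)
  · have hdiag : {p ∈ Finset.univ.filter fun p : G × G => Commute p.1 p.2 | ¬p.1 ≠ p.2} =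
        (Finset.univ : Finset G).diag := by
      ext ⟨x, y⟩
      simp +contextual
    rw [hdiag, Finset.diag_card, Finset.card_univ]

namespace DihedralGroup

variable (n : ℕ)

def commuteEquiv : { p : DihedralGroup n × DihedralGroup n // Commute p.1 p.2 } ≃
    ZMod n × ZMod n ⊕ {x : ZMod n // x + x = 0} × ZMod n ⊕ {x : ZMod n // x + x = 0} × ZMod n ⊕
      {x : ZMod n // x + x = 0} × ZMod n where
  toFun := fun
    | ⟨⟨r i, r j⟩, _⟩ => .inl (i, j)
    | ⟨⟨r i, sr j⟩, h⟩ => .inr (.inl (⟨i, by linear_combination -sr.inj h.eq⟩, j))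
    | ⟨⟨sr i, r j⟩, h⟩ => .inr (.inr (.inl (⟨j, by linear_combination sr.inj h.eq⟩, i)))
    | ⟨⟨sr i, sr j⟩, h⟩ => .inr (.inr (.inr (⟨i - j, by linear_combination -r.inj h.eq⟩, j)))
  invFun := fun
    | .inl (i, j) => ⟨⟨r i, r j⟩, congrArg r (add_comm i j)⟩
    | .inr (.inl (⟨i, hi⟩, j)) => ⟨⟨r i, sr j⟩, congrArg sr (by linear_combination -hi)⟩
    | .inr (.inr (.inl (⟨j, hj⟩, i))) => ⟨⟨sr i, r j⟩, congrArg sr (by linear_combination hj)⟩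
    | .inr (.inr (.inr (⟨d, hd⟩, j))) =>
        ⟨⟨sr (d + j), sr j⟩, congrArg r (by linear_combination -hd)⟩
  left_inv := fun
    | ⟨⟨r _, r _⟩, _⟩ => rfl
    | ⟨⟨r _, sr _⟩, _⟩ => rfl
    | ⟨⟨sr _, r _⟩, _⟩ => rfl
    | ⟨⟨sr _, sr _⟩, _⟩ => Subtype.ext (by simp)
  right_inv := fun
    | .inl _ => rfl
    | .inr (.inl _) => rfl
    | .inr (.inr (.inl _)) => rfl
    | .inr (.inr (.inr _)) => by simp

theorem card_commute [NeZero n] :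
    Nat.card { p : DihedralGroup n × DihedralGroup n // Commute p.1 p.2 } =
      n * (n + 3 * Nat.card {x : ZMod n // x + x = 0}) := by
  simp only [Nat.card_congr (commuteEquiv n), Nat.card_sum, Nat.card_prod, Nat.card_zmod]
  ring

theorem card_commute_two_mul (m : ℕ) [NeZero m] :
    Nat.card { p : DihedralGroup (2 * m) × DihedralGroup (2 * m) // Commute p.1 p.2 } =
      2 * m * (2 * m + 6) := by
  rw [card_commute, ZMod.card_add_self_eq_zero]

end DihedralGroup

/-- The commuting graph of `D_{2·2m}` (m ≥ 2) has exactly `m(2m-1) + 5m` edges. -/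
theorem stmt17 (m : ℕ) (hm : 2 ≤ m) :
    Nat.card (commutingGraph (DihedralGroup (2 * m))).edgeSet = m * (2 * m - 1) + 5 * m := by
  have : NeZero m := ⟨by omega⟩
  have h := two_mul_card_edgeSet_commutingGraph_add_card (DihedralGroup (2 * m))
  rw [DihedralGroup.nat_card, DihedralGroup.card_commute_two_mul] at h
  obtain ⟨k, rfl⟩ : ∃ k, m = k + 1 := ⟨m - 1, by omega⟩
  rw [show 2 * (k + 1) - 1 = 2 * k + 1 by omega]
  nlinarith
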